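/- arXiv:2512.24850 — 6 statements merged into one kernel-verified Lean document; each statement's English description precedes it below -/
import Mathlib

section
/- Let {(A_i, B_i)}_{i=1}^m be pairs of finite sets such that A_i ∩ B_i = ∅ for all i, and A_i ∩ B_j ≠ ∅ for all i ≠ j. Then ∑_{i=1}^m 1/C(|A_i|+|B_i|, |A_i|) ≤ 1. -/
/-!
Induction on a ground set `X` of size `n` containing all the sets. For each `x ∈ X`, the pairs
with `x ∉ Aᵢ`, with `x` deleted from `Bᵢ`, form a set-pair system on `X \ {x}`, so their weights
sum to at most `1`. Summing over `x`, pair `i` contributes `n - a - b` times its own weight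
`1 / C(a + b, a)` and `b` times `1 / C(a + b - 1, a)`, which together is exactly `n` times its weight.
Hence `n` times the total weight is at most `n`.
-/

open Finset

noncomputable def pairWeight (a b : ℕ) : ℝ := 1 / ((a + b).choose a : ℝ)

lemma pairWeight_zero_right (a : ℕ) : pairWeight a 0 = 1 := by
  simp [pairWeight]

lemma succ_mul_pairWeight (a b : ℕ) :
    (b + 1 : ℝ) * pairWeight a b = (a + b + 1) * pairWeight a (b + 1) := by
  have hpos (c : ℕ) : (0 : ℝ) < ((a + c).choose a : ℝ) := by
    exact_mod_cast Nat.choose_pos (Nat.le_add_right a c)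
  have key : (a + b).choose a * (a + b + 1) = (a + (b + 1)).choose a * (b + 1) := by
    rw [← add_assoc, Nat.choose_mul_succ_eq]
    congr 1
    omega
  simp only [pairWeight]
  rw [mul_one_div, mul_one_div, div_eq_div_iff (hpos b).ne' (hpos (b + 1)).ne']
  have key' : ((a + b).choose a : ℝ) * (a + b + 1) = ((a + (b + 1)).choose a : ℝ) * (b + 1) := by
    exact_mod_cast key
  linear_combination -key'

lemma sum_pairWeight_erase {α : Type*} [DecidableEq α] {X A B : Finset α} (hA : A ⊆ X)
    (hB : B ⊆ X) (hAB : Disjoint A B) (hBne : B.Nonempty) :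
    ∑ x ∈ X \ A, pairWeight #A #(B.erase x) = #X * pairWeight #A #B := by
  obtain ⟨b, hb⟩ : ∃ b, #B = b + 1 := ⟨#B - 1, by have := hBne.card_pos; omega⟩
  have hBX : B ⊆ X \ A := subset_sdiff.2 ⟨hB, hAB.symm⟩
  have hcard : #((X \ A) \ B) + #B + #A = #X := by
    rw [card_sdiff_add_card_eq_card hBX, card_sdiff_add_card_eq_card hA]
  have hout : ∀ x ∈ (X \ A) \ B, pairWeight #A #(B.erase x) = pairWeight #A #B :=
    fun x hx => by rw [erase_eq_of_notMem (mem_sdiff.1 hx).2]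
  have hin : ∀ x ∈ B, pairWeight #A #(B.erase x) = pairWeight #A b :=
    fun x hx => by rw [card_erase_of_mem hx, hb, Nat.add_sub_cancel]
  rw [← sum_sdiff hBX, sum_congr rfl hout, sum_congr rfl hin, sum_const, sum_const,
    nsmul_eq_mul, nsmul_eq_mul, ← hcard, hb]
  push_cast
  linear_combination succ_mul_pairWeight (#A) b

section SetPairSystem

variable {α ι : Type*}

structure IsSetPairSystem (s : Finset ι) (A B : ι → Finset α) : Prop where
  disjoint : ∀ i ∈ s, Disjoint (A i) (B i)
  not_disjoint : ∀ i ∈ s, ∀ j ∈ s, i ≠ j → ¬Disjoint (A i) (B j)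

namespace IsSetPairSystem

variable {s : Finset ι} {A B : ι → Finset α}

lemma eq_singleton_of_eq_empty (h : IsSetPairSystem s A B) {i : ι} (hi : i ∈ s)
    (hBi : B i = ∅) : s = {i} :=
  eq_singleton_iff_unique_mem.2 ⟨hi, fun j hj => by
    by_contra hji
    exact h.not_disjoint j hj i hi hji (hBi ▸ disjoint_empty_right _)⟩

variable [DecidableEq α]

lemma erase (h : IsSetPairSystem s A B) (x : α) :
    IsSetPairSystem {i ∈ s | x ∉ A i} A (fun i => (B i).erase x) where
  disjoint i hi := (h.disjoint i (mem_filter.1 hi).1).mono_right (erase_subset _ _)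
  not_disjoint i hi j hj hij hdisj := by
    obtain ⟨hi, hxi⟩ := mem_filter.1 hi
    refine h.not_disjoint i hi j (mem_filter.1 hj).1 hij ?_
    rw [← erase_eq_of_notMem hxi]
    exact disjoint_erase_comm.2 hdisj

theorem sum_pairWeight_le_one (h : IsSetPairSystem s A B) {X : Finset α}
    (hX : ∀ i ∈ s, A i ∪ B i ⊆ X) : ∑ i ∈ s, pairWeight #(A i) #(B i) ≤ 1 := by
  induction X using Finset.strongInduction generalizing s B with
  | H X ih =>
  by_cases hBempty : ∃ i ∈ s, B i = ∅
  · obtain ⟨i, hi, hBi⟩ := hBempty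
    rw [h.eq_singleton_of_eq_empty hi hBi, sum_singleton, hBi, card_empty, pairWeight_zero_right]
  push Not at hBempty
  rcases s.eq_empty_or_nonempty with rfl | ⟨i₀, hi₀⟩
  · simp
  have hXpos : (0 : ℝ) < #X := by
    obtain ⟨x, hx⟩ := hBempty i₀ hi₀
    exact_mod_cast card_pos.2 ⟨x, hX i₀ hi₀ (mem_union_right _ hx)⟩
  have hrestrict : ∀ x ∈ X, ∑ i ∈ s with x ∉ A i, pairWeight #(A i) #((B i).erase x) ≤ 1 :=
    fun x hx => ih _ (erase_ssubset hx) (h.erase x) fun i hi => by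
      obtain ⟨hi, hxi⟩ := mem_filter.1 hi
      rw [← erase_eq_of_notMem hxi, ← erase_union_distrib]
      exact erase_subset_erase x (hX i hi)
  refine le_of_mul_le_mul_left ?_ hXpos
  calc (#X : ℝ) * ∑ i ∈ s, pairWeight #(A i) #(B i)
      = ∑ i ∈ s, ∑ x ∈ X \ A i, pairWeight #(A i) #((B i).erase x) := by
        rw [mul_sum]
        refine sum_congr rfl fun i hi => (sum_pairWeight_erase ?_ ?_ (h.disjoint i hi)
          (hBempty i hi)).symm
        · exact subset_union_left.trans (hX i hi)
        · exact subset_union_right.trans (hX i hi)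
    _ = ∑ x ∈ X, ∑ i ∈ s with x ∉ A i, pairWeight #(A i) #((B i).erase x) :=
        sum_comm' fun i x => by simp only [mem_sdiff, mem_filter]; tauto
    _ ≤ ∑ _x ∈ X, 1 := sum_le_sum hrestrict
    _ = #X * 1 := by rw [sum_const, nsmul_eq_mul]

end IsSetPairSystem

end SetPairSystem

theorem bollobas_set_pairs {α : Type*} [DecidableEq α] (m : ℕ) (A B : Fin m → Finset α)
    (hdisj : ∀ i, A i ∩ B i = ∅)
    (hcross : ∀ i j, i ≠ j → (A i ∩ B j).Nonempty) :
    ∑ i, (1 : ℝ) / (Nat.choose ((A i).card + (B i).card) ((A i).card) : ℝ) ≤ 1 := by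
  have h : IsSetPairSystem univ A B :=
    ⟨fun i _ => disjoint_iff_inter_eq_empty.2 (hdisj i),
      fun i _ j _ hij => not_disjoint_iff_nonempty_inter.2 (hcross i j hij)⟩
  exact h.sum_pairWeight_le_one fun i _ => subset_biUnion_of_mem (fun i => A i ∪ B i) (mem_univ i)
end

section
/- Let {(A_i, B_i)}_{i=1}^m be pairs of finite sets with |A_i| = a and |B_i| = b for all i, such that A_i ∩ B_i = ∅ for all i and A_i ∩ B_j ≠ ∅ for all i ≠ j. Then m ≤ C(a+b, a). -/
/-!
The uniform bound follows from Bollobás's weighted inequality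
`∑ i, C(|Aᵢ| + |Bᵢ|, |Aᵢ|)⁻¹ ≤ 1`, proved by induction on a ground set `X` containing all the
sets. For `x ∈ X`, the pairs `(Aᵢ, Bᵢ \ {x})` with `x ∉ Aᵢ` satisfy the same hypotheses on
`X \ {x}`. Summing these inequalities over `x ∈ X`, a pair with `Bᵢ ≠ ∅` contributes exactly `|X|`
times its weight, since `b · C(a + b - 1, a)⁻¹ = (a + b) · C(a + b, a)⁻¹`; a pair with `Bᵢ = ∅`
can only occur alone.
-/

open Finset

section

variable {α : Type*} [DecidableEq α]

def bollobasWeight (A B : Finset α) : ℚ := ((#A + #B).choose #A : ℚ)⁻¹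

lemma add_one_mul_inv_choose (a b : ℕ) :
    (b + 1 : ℚ) * ((a + b).choose a : ℚ)⁻¹ = (a + (b + 1)) * ((a + (b + 1)).choose a : ℚ)⁻¹ := by
  have key := Nat.add_one_mul_choose_eq (a + b) b
  rw [← Nat.choose_symm_add, add_assoc, ← Nat.choose_symm_add] at key
  have h₁ : ((a + b).choose a : ℚ) ≠ 0 := Nat.cast_ne_zero.2 (Nat.choose_pos (by omega)).ne'
  have h₂ : ((a + (b + 1)).choose a : ℚ) ≠ 0 := Nat.cast_ne_zero.2 (Nat.choose_pos (by omega)).ne'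
  have keyℚ : ((a + (b + 1) : ℚ)) * (a + b).choose a = (a + (b + 1)).choose a * (b + 1) := by
    exact_mod_cast key
  field_simp
  linear_combination -keyℚ

lemma sum_bollobasWeight_erase {X A B : Finset α} (hAB : Disjoint A B) (hABX : A ∪ B ⊆ X)
    (hB : B.Nonempty) :
    ∑ x ∈ X \ A, bollobasWeight A (B.erase x) = #X * bollobasWeight A B := by
  obtain ⟨b, hb⟩ : ∃ b, #B = b + 1 := Nat.exists_eq_add_one.2 hB.card_pos
  have hsplit : X \ A = B ∪ X \ (A ∪ B) := by grind [disjoint_left, union_subset_iff]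
  have hB_part : ∑ x ∈ B, bollobasWeight A (B.erase x) = (#A + #B) * bollobasWeight A B := by
    have : ∀ x ∈ B, bollobasWeight A (B.erase x) = ((#A + b).choose #A : ℚ)⁻¹ := by
      intro x hx
      rw [bollobasWeight, card_erase_of_mem hx, hb, Nat.add_sub_cancel]
    rw [sum_congr rfl this, sum_const, nsmul_eq_mul, bollobasWeight, hb]
    push_cast
    rw [add_one_mul_inv_choose]
  have hrest : ∀ x ∈ X \ (A ∪ B), bollobasWeight A (B.erase x) = bollobasWeight A B := by
    intro x hx
    rw [erase_eq_of_notMem fun h => (mem_sdiff.1 hx).2 (mem_union_right A h)]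
  have hcard : (#(X \ (A ∪ B)) : ℚ) + (#A + #B) = #X := by
    exact_mod_cast card_union_of_disjoint hAB ▸ card_sdiff_add_card_eq_card hABX
  rw [hsplit, sum_union (disjoint_sdiff.mono_left subset_union_right), hB_part, sum_congr rfl hrest,
    sum_const, nsmul_eq_mul, ← hcard]
  ring

lemma card_mul_sum_bollobasWeight {ι : Type*} {X : Finset α} {s : Finset ι} {A B : ι → Finset α}
    (hX : ∀ i ∈ s, A i ∪ B i ⊆ X) (hdisj : ∀ i ∈ s, Disjoint (A i) (B i))
    (hB : ∀ i ∈ s, (B i).Nonempty) :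
    #X * ∑ i ∈ s, bollobasWeight (A i) (B i) =
      ∑ x ∈ X, ∑ i ∈ s with x ∉ A i, bollobasWeight (A i) ((B i).erase x) := calc
  _ = ∑ i ∈ s, ∑ x ∈ X \ A i, bollobasWeight (A i) ((B i).erase x) := by
    rw [mul_sum]
    exact sum_congr rfl fun i hi ↦ (sum_bollobasWeight_erase (hdisj i hi) (hX i hi) (hB i hi)).symm
  _ = _ := by
    refine sum_comm' fun i x ↦ ?_
    simp only [mem_sdiff, mem_filter]
    tauto

theorem sum_bollobasWeight_le_one {ι : Type*} (X : Finset α) (s : Finset ι) (A B : ι → Finset α)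
    (hX : ∀ i ∈ s, A i ∪ B i ⊆ X) (hdisj : ∀ i ∈ s, Disjoint (A i) (B i))
    (hcross : ∀ i ∈ s, ∀ j ∈ s, i ≠ j → ¬Disjoint (A i) (B j)) :
    ∑ i ∈ s, bollobasWeight (A i) (B i) ≤ 1 := by
  induction X using Finset.strongInduction generalizing s B with
  | H X ih =>
  by_cases hB : ∃ i ∈ s, B i = ∅
  · obtain ⟨i, hi, hBi⟩ := hB
    rw [sum_eq_single_of_mem i hi fun j hj hji => absurd (hBi ▸ disjoint_empty_right _)
      (hcross j hj i hi hji), hBi]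
    simp [bollobasWeight]
  push Not at hB
  rcases s.eq_empty_or_nonempty with rfl | ⟨i, hi⟩
  · simp
  have hXpos : (0 : ℚ) < #X := by
    exact_mod_cast (hB i hi).card_pos.trans_le (card_le_card (union_subset_iff.1 (hX i hi)).2)
  have hlink : ∀ x ∈ X, ∑ i ∈ s with x ∉ A i, bollobasWeight (A i) ((B i).erase x) ≤ 1 := by
    intro x hx
    refine ih _ (erase_ssubset hx) _ (fun i ↦ (B i).erase x) ?_ ?_ ?_
    · intro i hi
      rw [← erase_eq_of_notMem (mem_filter.1 hi).2, ← erase_union_distrib]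
      exact erase_subset_erase x (hX i (mem_filter.1 hi).1)
    · intro i hi
      exact (hdisj i (mem_filter.1 hi).1).mono_right (erase_subset _ _)
    · intro i hi j hj hij
      rw [← disjoint_erase_comm, erase_eq_of_notMem (mem_filter.1 hi).2]
      exact hcross i (mem_filter.1 hi).1 j (mem_filter.1 hj).1 hij
  have hcount : #X * ∑ i ∈ s, bollobasWeight (A i) (B i) ≤ #X * 1 := by
    rw [card_mul_sum_bollobasWeight hX hdisj hB, mul_one, ← nsmul_one, ← sum_const]
    exact sum_le_sum hlink
  exact le_of_mul_le_mul_left hcount hXpos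

end

theorem bollobas_uniform {α : Type*} [DecidableEq α] (m a b : ℕ) (A B : Fin m → Finset α)
    (hA : ∀ i, (A i).card = a) (hB : ∀ i, (B i).card = b)
    (hdisj : ∀ i, A i ∩ B i = ∅)
    (hcross : ∀ i j, i ≠ j → (A i ∩ B j).Nonempty) :
    m ≤ Nat.choose (a + b) a := by
  have hsum := sum_bollobasWeight_le_one (univ.biUnion fun i ↦ A i ∪ B i) univ A B
    (fun i _ ↦ subset_biUnion_of_mem (fun i ↦ A i ∪ B i) (mem_univ i))
    (fun i _ ↦ disjoint_iff_inter_eq_empty.2 (hdisj i))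
    (fun i _ j _ hij ↦ not_disjoint_iff_nonempty_inter.2 (hcross i j hij))
  simp only [bollobasWeight, hA, hB, sum_const, card_univ, Fintype.card_fin, nsmul_eq_mul] at hsum
  have hpos : (0 : ℚ) < (a + b).choose a := by exact_mod_cast Nat.choose_pos (Nat.le_add_right a b)
  rw [mul_inv_le_iff₀ hpos, one_mul] at hsum
  exact_mod_cast hsum
end

section
/- Let H be a 3-uniform hypergraph with transversal number τ(H) = 3 such that for every edge e, τ(H - e) ≤ 2. Then H has at most 10 edges. -/
def IsTransversal {α : Type*} [DecidableEq α] (E : Finset (Finset α)) (T : Finset α) : Prop :=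
  ∀ e ∈ E, (e ∩ T).Nonempty

noncomputable def tau {α : Type*} [DecidableEq α] (V : Finset α) (E : Finset (Finset α)) : ℕ :=
  sInf {n | ∃ T ⊆ V, T.card = n ∧ IsTransversal E T}

open Finset

private lemma numfact : (200:ℕ) ^ 5 < 132 * Nat.choose 200 5 := by
  have h := Nat.descFactorial_eq_factorial_mul_choose 200 5
  have h5 : Nat.factorial 5 = 120 := rfl
  rw [h5] at h
  have h2 : Nat.descFactorial 200 5 = 304278004800 := by
    show 196 * (197 * (198 * (199 * (200 * 1)))) = 304278004800
    norm_num
  omega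

set_option maxHeartbeats 2000000 in
/-- Bollobás-type counting bound for (3,2) set-pair systems. -/
theorem bollobas10 {α : Type*} [DecidableEq α] (V : Finset α) (E : Finset (Finset α))
    (B : Finset α → Finset α)
    (hA : ∀ e ∈ E, e ⊆ V ∧ e.card = 3)
    (hBV : ∀ e ∈ E, B e ⊆ V)
    (hBcard : ∀ e ∈ E, (B e).card = 2)
    (hBe : ∀ e ∈ E, e ∩ B e = ∅)
    (hcross : ∀ e ∈ E, ∀ f ∈ E, e ≠ f → (e ∩ B f).Nonempty) :
    E.card ≤ 10 := by
  classical
  rcases E.eq_empty_or_nonempty with rfl | ⟨e₀, he₀⟩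
  · simp
  set n := V.card with hn
  have hn5 : 5 ≤ n := by
    have h1 : e₀ ∪ B e₀ ⊆ V := union_subset (hA e₀ he₀).1 (hBV e₀ he₀)
    have h2 : (e₀ ∪ B e₀).card = 5 := by
      rw [card_union_of_disjoint (disjoint_iff_inter_eq_empty.mpr (hBe e₀ he₀)),
        (hA e₀ he₀).2, hBcard e₀ he₀]
    calc 5 = (e₀ ∪ B e₀).card := h2.symm
      _ ≤ V.card := card_le_card h1
  -- the event sets
  let S : Finset α → Finset ({x // x ∈ V} → Fin 200) := fun e =>
    univ.filter (fun σ => ∀ x y : {x // x ∈ V}, ↑x ∈ B e → ↑y ∈ e → σ x < σ y)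
  -- disjointness
  have hdisj : ∀ e ∈ E, ∀ f ∈ E, e ≠ f → Disjoint (S e) (S f) := by
    intro e he f hf hef
    rw [Finset.disjoint_left]
    intro σ hσe hσf
    obtain ⟨x, hx⟩ := hcross e he f hf hef
    obtain ⟨y, hy⟩ := hcross f hf e he (Ne.symm hef)
    rw [mem_inter] at hx hy
    have hxV : x ∈ V := (hA e he).1 hx.1
    have hyV : y ∈ V := (hA f hf).1 hy.1
    simp only [S, mem_filter] at hσe hσf
    have h1 := hσe.2 ⟨y, hyV⟩ ⟨x, hxV⟩ hy.2 hx.1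
    have h2 := hσf.2 ⟨x, hxV⟩ ⟨y, hyV⟩ hx.2 hy.1
    exact absurd (h1.trans h2) (lt_irrefl _)
  -- lower bound on each event
  have hlow : ∀ e ∈ E, 12 * Nat.choose 200 5 * 200 ^ (n - 5) ≤ (S e).card := by
    intro e he
    have hAV : e ⊆ V := (hA e he).1
    have hAcard : e.card = 3 := (hA e he).2
    have hBVe : B e ⊆ V := hBV e he
    have hB2 : (B e).card = 2 := hBcard e he
    have hint : e ∩ B e = ∅ := hBe e he
    set K : Finset α := e ∪ B e with hK
    have hKV : K ⊆ V := union_subset hAV hBVe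
    have hK5 : K.card = 5 := by
      rw [hK, card_union_of_disjoint (disjoint_iff_inter_eq_empty.mpr hint), hAcard, hB2]
    obtain ⟨eA⟩ : Nonempty ({x // x ∈ e} ≃ Fin 3) :=
      ⟨Fintype.equivFinOfCardEq (by rw [Fintype.card_coe]; exact hAcard)⟩
    obtain ⟨eB⟩ : Nonempty ({x // x ∈ B e} ≃ Fin 2) :=
      ⟨Fintype.equivFinOfCardEq (by rw [Fintype.card_coe]; exact hB2)⟩
    -- the domain of the injection
    let D := {s : Finset (Fin 200) // s.card = 5} ×
      (Equiv.Perm (Fin 2) × Equiv.Perm (Fin 3)) × ({x : {v // v ∈ V} // ¬ (↑x ∈ K)} → Fin 200)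
    have hnotK : ∀ (x : {v // v ∈ V}), ¬ (↑x ∈ B e) → ¬ (↑x ∈ e) → ¬ (↑x ∈ K) := by
      intro x h1 h2 h3
      exact (mem_union.mp h3).elim h2 h1
    let Θ : D → ({v // v ∈ V} → Fin 200) := fun d x =>
      if hx : ↑x ∈ B e then
        d.1.1.orderEmbOfFin d.1.2 (Fin.castLE (by norm_num) (d.2.1.1 (eB ⟨↑x, hx⟩)))
      else if hx2 : ↑x ∈ e then
        d.1.1.orderEmbOfFin d.1.2 ⟨2 + (d.2.1.2 (eA ⟨↑x, hx2⟩)).val, by omega⟩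
      else d.2.2 ⟨x, hnotK x hx hx2⟩
    have hmem : ∀ d : D, Θ d ∈ S e := by
      intro d
      simp only [S, mem_filter, mem_univ, true_and]
      intro x y hx hy
      have hyB : ¬ (↑y ∈ B e) := by
        intro h
        have : (y : α) ∈ e ∩ B e := mem_inter.mpr ⟨hy, h⟩
        rw [hint] at this
        exact absurd this (notMem_empty _)
      show Θ d x < Θ d y
      simp only [Θ, dif_pos hx, dif_neg hyB, dif_pos hy]
      apply (d.1.1.orderEmbOfFin d.1.2).strictMono
      rw [Fin.lt_def]
      simp only [Fin.coe_castLE]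
      have := (d.2.1.1 (eB ⟨↑x, hx⟩)).isLt
      omega
    have hinj : Function.Injective Θ := by
      rintro ⟨⟨s1, hs1⟩, ⟨pb1, pa1⟩, g1⟩ ⟨⟨s2, hs2⟩, ⟨pb2, pa2⟩, g2⟩ heq
      have happ : ∀ x, Θ ⟨⟨s1, hs1⟩, ⟨pb1, pa1⟩, g1⟩ x = Θ ⟨⟨s2, hs2⟩, ⟨pb2, pa2⟩, g2⟩ x :=
        fun x => congrFun heq x
      -- step 1 : s1 = s2
      have hBval : ∀ z : {x // x ∈ B e},
          Θ ⟨⟨s1, hs1⟩, ⟨pb1, pa1⟩, g1⟩ ⟨↑z, hBVe z.2⟩ =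
            s1.orderEmbOfFin hs1 (Fin.castLE (by norm_num) (pb1 (eB z))) := by
        intro z
        simp only [Θ, dif_pos z.2]
      have hBval2 : ∀ z : {x // x ∈ B e},
          Θ ⟨⟨s2, hs2⟩, ⟨pb2, pa2⟩, g2⟩ ⟨↑z, hBVe z.2⟩ =
            s2.orderEmbOfFin hs2 (Fin.castLE (by norm_num) (pb2 (eB z))) := by
        intro z
        simp only [Θ, dif_pos z.2]
      have hznB : ∀ z : {x // x ∈ e}, ¬ ((z : α) ∈ B e) := by
        intro z h
        have : (z : α) ∈ e ∩ B e := mem_inter.mpr ⟨z.2, h⟩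
        rw [hint] at this
        exact absurd this (notMem_empty _)
      have hAval : ∀ z : {x // x ∈ e},
          Θ ⟨⟨s1, hs1⟩, ⟨pb1, pa1⟩, g1⟩ ⟨↑z, hAV z.2⟩ =
            s1.orderEmbOfFin hs1 ⟨2 + (pa1 (eA z)).val, by omega⟩ := by
        intro z
        simp only [Θ, dif_neg (hznB z), dif_pos z.2]
      have hAval2 : ∀ z : {x // x ∈ e},
          Θ ⟨⟨s2, hs2⟩, ⟨pb2, pa2⟩, g2⟩ ⟨↑z, hAV z.2⟩ =
            s2.orderEmbOfFin hs2 ⟨2 + (pa2 (eA z)).val, by omega⟩ := by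
        intro z
        simp only [Θ, dif_neg (hznB z), dif_pos z.2]
      have hss : s1 = s2 := by
        have hsub : s1 ⊆ s2 := by
          intro v hv
          have hv' : v ∈ (↑s1 : Set (Fin 200)) := hv
          rw [← Finset.range_orderEmbOfFin s1 hs1] at hv'
          obtain ⟨i, rfl⟩ := hv'
          by_cases hi2 : i.val < 2
          · have h3 : ∃ z : {x // x ∈ B e}, pb1 (eB z) = ⟨i.val, hi2⟩ :=
              ⟨eB.symm (pb1.symm ⟨i.val, hi2⟩), by
                rw [Equiv.apply_symm_apply, Equiv.apply_symm_apply]⟩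
            obtain ⟨z, h3⟩ := h3
            have h1 := hBval z
            have h2 := hBval2 z
            have h4 : (Fin.castLE (by norm_num : 2 ≤ 5) (pb1 (eB z))) = i := by
              rw [h3]; exact Fin.ext rfl
            have heq : s1.orderEmbOfFin hs1 i =
                s2.orderEmbOfFin hs2 (Fin.castLE (by norm_num) (pb2 (eB z))) :=
              ((congrArg _ h4).symm.trans h1.symm).trans ((happ _).trans h2)
            rw [heq]
            exact Finset.orderEmbOfFin_mem s2 hs2 _
          · have h3 : ∃ z : {x // x ∈ e}, pa1 (eA z) = ⟨i.val - 2, by omega⟩ :=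
              ⟨eA.symm (pa1.symm ⟨i.val - 2, by omega⟩), by
                rw [Equiv.apply_symm_apply, Equiv.apply_symm_apply]⟩
            obtain ⟨z, h3⟩ := h3
            have h1 := hAval z
            have h2 := hAval2 z
            have h4 : (⟨2 + (pa1 (eA z)).val, by omega⟩ : Fin 5) = i := by
              have h5 : (pa1 (eA z)).val = i.val - 2 := congrArg Fin.val h3
              exact Fin.ext (by simp [h5]; omega)
            have heq : s1.orderEmbOfFin hs1 i =
                s2.orderEmbOfFin hs2 ⟨2 + (pa2 (eA z)).val, by omega⟩ :=
              ((congrArg _ h4).symm.trans h1.symm).trans ((happ _).trans h2)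
            rw [heq]
            exact Finset.orderEmbOfFin_mem s2 hs2 _
        exact eq_of_subset_of_card_le hsub (by rw [hs1, hs2])
      subst hss
      -- step 2 : pb1 = pb2
      have hpb : pb1 = pb2 := by
        have hz : ∀ z : {x // x ∈ B e}, pb1 (eB z) = pb2 (eB z) := by
          intro z
          have h1 := (hBval z).symm.trans ((happ _).trans (hBval2 z))
          have h2 := (s1.orderEmbOfFin hs1).injective h1
          have h3 := congrArg Fin.val h2
          simp only [Fin.coe_castLE] at h3
          exact Fin.ext h3
        apply Equiv.ext
        intro j
        simpa using hz (eB.symm j)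
      -- step 3 : pa1 = pa2
      have hpa : pa1 = pa2 := by
        have hz : ∀ z : {x // x ∈ e}, pa1 (eA z) = pa2 (eA z) := by
          intro z
          have h1 := (hAval z).symm.trans ((happ _).trans (hAval2 z))
          have h2 := (s1.orderEmbOfFin hs1).injective h1
          have h3 := congrArg Fin.val h2
          simp only at h3
          exact Fin.ext (by omega)
        apply Equiv.ext
        intro j
        simpa using hz (eA.symm j)
      -- step 4 : g1 = g2
      have hg : g1 = g2 := by
        funext y
        have hyB : ¬ ((y.1 : α) ∈ B e) := fun h => y.2 (mem_union_right _ h)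
        have hyA : ¬ ((y.1 : α) ∈ e) := fun h => y.2 (mem_union_left _ h)
        have h1 := happ y.1
        simp only [Θ, dif_neg hyB, dif_neg hyA] at h1
        convert h1
      subst hpb; subst hpa; subst hg
      rfl
    -- cardinality of the domain
    have hcard1 : Fintype.card {x : {v // v ∈ V} // ↑x ∈ K} = 5 := by
      have E1 : {x : {v // v ∈ V} // ↑x ∈ K} ≃ {a // a ∈ V ∧ a ∈ K} :=
        Equiv.subtypeSubtypeEquivSubtypeInter (· ∈ V) (· ∈ K)
      have E2 : {a // a ∈ V ∧ a ∈ K} ≃ {a // a ∈ K} :=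
        Equiv.subtypeEquivRight (fun a => ⟨fun h => h.2, fun h => ⟨hKV h, h⟩⟩)
      rw [Fintype.card_congr (E1.trans E2), Fintype.card_coe, hK5]
    have hcard2 : Fintype.card {x : {v // v ∈ V} // ¬ (↑x ∈ K)} = n - 5 := by
      rw [Fintype.card_subtype_compl, hcard1, Fintype.card_coe]
    have hcardD : Fintype.card D = 12 * Nat.choose 200 5 * 200 ^ (n - 5) := by
      simp only [D, Fintype.card_prod, Fintype.card_finset_len, Fintype.card_fun,
        Fintype.card_perm, Fintype.card_fin, hcard2]
      norm_num [Nat.factorial]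
      ring
    calc 12 * Nat.choose 200 5 * 200 ^ (n - 5) = Fintype.card D := hcardD.symm
      _ = (univ : Finset D).card := (Finset.card_univ).symm
      _ ≤ (S e).card :=
        Finset.card_le_card_of_injOn Θ (fun d _ => hmem d) (hinj.injOn)
  -- sum of the events
  have hsum : ∑ e ∈ E, (S e).card ≤ 200 ^ n := by
    rw [← Finset.card_biUnion hdisj]
    calc (E.biUnion S).card ≤ (univ : Finset ({x // x ∈ V} → Fin 200)).card :=
        card_le_card (subset_univ _)
      _ = 200 ^ n := by
        rw [Finset.card_univ, Fintype.card_fun, Fintype.card_fin, Fintype.card_coe]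
  -- put it together
  have hmain : E.card * (12 * Nat.choose 200 5 * 200 ^ (n - 5)) ≤ 200 ^ n := by
    calc E.card * (12 * Nat.choose 200 5 * 200 ^ (n - 5))
        = E.card • (12 * Nat.choose 200 5 * 200 ^ (n - 5)) := by simp
      _ ≤ ∑ e ∈ E, (S e).card := Finset.card_nsmul_le_sum E _ _ hlow
      _ ≤ 200 ^ n := hsum
  have hpow : (200:ℕ) ^ n = 200 ^ 5 * 200 ^ (n - 5) := by
    rw [← pow_add]
    congr 1
    omega
  have hlt : 200 ^ 5 * 200 ^ (n - 5) < 11 * (12 * Nat.choose 200 5 * 200 ^ (n - 5)) := by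
    have h1 : (0:ℕ) < 200 ^ (n - 5) := pow_pos (by norm_num) _
    calc 200 ^ 5 * 200 ^ (n - 5) < (132 * Nat.choose 200 5) * 200 ^ (n - 5) :=
        (Nat.mul_lt_mul_right h1).mpr numfact
      _ = 11 * (12 * Nat.choose 200 5 * 200 ^ (n - 5)) := by ring
  have hfin : E.card * (12 * Nat.choose 200 5 * 200 ^ (n - 5)) <
      11 * (12 * Nat.choose 200 5 * 200 ^ (n - 5)) := by
    rw [hpow] at hmain
    exact lt_of_le_of_lt hmain hlt
  have hE11 : E.card < 11 := lt_of_mul_lt_mul_right hfin (Nat.zero_le _)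
  omega

theorem tau_critical_edge_bound {α : Type*} [DecidableEq α]
    (V : Finset α) (E : Finset (Finset α))
    (hE : ∀ e ∈ E, e ⊆ V ∧ e.card = 3)
    (htau : tau V E = 3)
    (hdel : ∀ e ∈ E, tau V (E.erase e) ≤ 2) :
    E.card ≤ 10 := by
  classical
  rcases E.eq_empty_or_nonempty with rfl | ⟨e₀, he₀⟩
  · simp
  -- no transversal of size ≤ 2
  have hno : ∀ T, T ⊆ V → IsTransversal E T → ¬(T.card ≤ 2) := by
    intro T hTV hT hle
    have h1 : tau V E ≤ T.card := Nat.sInf_le ⟨T, hTV, rfl, hT⟩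
    omega
  -- for each edge a small transversal of the rest, disjoint from the edge
  have hTe : ∀ e ∈ E, ∃ T, T ⊆ V ∧ T.card ≤ 2 ∧ IsTransversal (E.erase e) T ∧ e ∩ T = ∅ := by
    intro e he
    have hne : (tau V (E.erase e)) ∈
        {n | ∃ T ⊆ V, T.card = n ∧ IsTransversal (E.erase e) T} := by
      apply Nat.sInf_mem
      refine ⟨V.card, V, Finset.Subset.refl V, rfl, ?_⟩
      intro f hf
      have hsub : f ⊆ V := (hE f (mem_of_mem_erase hf)).1
      rw [inter_eq_left.mpr hsub]
      rw [← card_pos, (hE f (mem_of_mem_erase hf)).2]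
      norm_num
    obtain ⟨T, hTV, hTcard, hTt⟩ := hne
    have hT2 : T.card ≤ 2 := by rw [hTcard]; exact hdel e he
    refine ⟨T, hTV, hT2, hTt, ?_⟩
    by_contra h
    rw [← ne_eq, ← nonempty_iff_ne_empty] at h
    apply hno T hTV _ hT2
    intro f hf
    by_cases hfe : f = e
    · subst hfe; exact h
    · exact hTt f (mem_erase.mpr ⟨hfe, hf⟩)
  -- |V| ≥ 5
  have hV5 : 5 ≤ V.card := by
    by_contra h
    push_neg at h
    have h3 : 3 ≤ V.card := by
      calc 3 = e₀.card := ((hE e₀ he₀).2).symm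
        _ ≤ V.card := card_le_card (hE e₀ he₀).1
    obtain ⟨T, hTV, hT2⟩ := Finset.exists_subset_card_eq (show 2 ≤ V.card by omega)
    apply hno T hTV _ (le_of_eq hT2)
    intro f hf
    have h4 := Finset.card_inter_add_card_union f T
    have h5 : (f ∪ T).card ≤ V.card :=
      card_le_card (union_subset (hE f hf).1 hTV)
    rw [← card_pos]
    have h6 : f.card = 3 := (hE f hf).2
    omega
  -- pad the private transversals to size exactly 2
  have key : ∀ e, ∃ Bf : Finset α,
      e ∈ E → (Bf ⊆ V ∧ Bf.card = 2 ∧ e ∩ Bf = ∅ ∧ ∀ f ∈ E, f ≠ e → (f ∩ Bf).Nonempty) := by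
    intro e
    by_cases he : e ∈ E
    · obtain ⟨T, hTV, hT2, hTt, hTe'⟩ := hTe e he
      have hTsub : T ⊆ V \ e := by
        rw [subset_sdiff]
        refine ⟨hTV, ?_⟩
        rw [disjoint_comm, disjoint_iff_inter_eq_empty]
        exact hTe'
      have hVe : 2 ≤ (V \ e).card := by
        rw [card_sdiff_of_subset (hE e he).1, (hE e he).2]
        omega
      obtain ⟨Bf, hTBf, hBfV, hBf2⟩ := Finset.exists_subsuperset_card_eq hTsub hT2 hVe
      refine ⟨Bf, fun _ => ⟨hBfV.trans (sdiff_subset), hBf2, ?_, ?_⟩⟩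
      · rw [← disjoint_iff_inter_eq_empty, disjoint_comm]
        exact disjoint_of_subset_left hBfV sdiff_disjoint
      · intro f hf hfe
        obtain ⟨x, hx⟩ := hTt f (mem_erase.mpr ⟨hfe, hf⟩)
        rw [mem_inter] at hx
        exact ⟨x, mem_inter.mpr ⟨hx.1, hTBf hx.2⟩⟩
    · exact ⟨∅, fun h => absurd h he⟩
  choose B hB using key
  exact bollobas10 V E B hE (fun e he => (hB e he).1) (fun e he => (hB e he).2.1)
    (fun e he => (hB e he).2.2.1)
    (fun e he f hf hne => (hB f hf).2.2.2 e he hne)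
end

section
/- Let H be a 3-uniform hypergraph that is τ-critical of order 3, i.e. τ(H) = 3 and τ(H - e) ≤ 2 for every edge e. Then the minimum degree δ(H) ≤ 6. -/
def degree {α : Type*} [DecidableEq α] (E : Finset (Finset α)) (v : α) : ℕ :=
  (E.filter (fun e => v ∈ e)).card

namespace TauAux

variable {α : Type*} [DecidableEq α]

lemma eq_triple {f : Finset α} {p q z : α} (hp : p ∈ f) (hq : q ∈ f) (hz : z ∈ f)
    (hpq : p ≠ q) (hzp : z ≠ p) (hzq : z ≠ q) (hcard : f.card = 3) :
    f = insert p (insert q {z}) := by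
  have hsub : insert p (insert q ({z} : Finset α)) ⊆ f := by
    intro u hu
    simp only [Finset.mem_insert, Finset.mem_singleton] at hu
    rcases hu with rfl | rfl | rfl <;> assumption
  have hc : (insert p (insert q ({z} : Finset α))).card = 3 := by
    rw [Finset.card_insert_of_notMem (by simp [hpq, Ne.symm hzp]),
        Finset.card_insert_of_notMem (by simp [Ne.symm hzq])]
    simp
  exact (Finset.eq_of_subset_of_card_le hsub (by omega)).symm

lemma third_vertex {f : Finset α} {p q : α} (hp : p ∈ f) (hq : q ∈ f) (hpq : p ≠ q)
    (hcard : f.card = 3) : ∃ w, w ≠ p ∧ w ≠ q ∧ f = insert p (insert q {w}) := by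
  have hsub : ({p, q} : Finset α) ⊆ f := by
    intro u hu
    simp only [Finset.mem_insert, Finset.mem_singleton] at hu
    rcases hu with rfl | rfl <;> assumption
  have h1 : (f \ {p, q}).card = 1 := by
    rw [Finset.card_sdiff_of_subset hsub, Finset.card_pair hpq, hcard]
  obtain ⟨w, hw⟩ := Finset.card_eq_one.mp h1
  have hwmem : w ∈ f \ ({p, q} : Finset α) := hw ▸ Finset.mem_singleton_self w
  simp only [Finset.mem_sdiff, Finset.mem_insert, Finset.mem_singleton] at hwmem
  obtain ⟨hwf, hwpq⟩ := hwmem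
  push_neg at hwpq
  exact ⟨w, hwpq.1, hwpq.2, eq_triple hp hq hwf hpq hwpq.1 hwpq.2 hcard⟩

lemma subset_pair_of_nonempty {s : Finset α} (hne : s.Nonempty) (h : s.card ≤ 2) :
    ∃ u v, u ∈ s ∧ v ∈ s ∧ s ⊆ {u, v} := by
  obtain ⟨u, hu⟩ := hne
  by_cases h2 : (s.erase u).Nonempty
  · obtain ⟨v, hv⟩ := h2
    refine ⟨u, v, hu, Finset.mem_of_mem_erase hv, ?_⟩
    intro z hz
    rcases eq_or_ne z u with rfl | hzu
    · simp
    · have hz' : z ∈ s.erase u := Finset.mem_erase.mpr ⟨hzu, hz⟩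
      have hc : (s.erase u).card ≤ 1 := by
        have := Finset.card_erase_of_mem hu; omega
      have := Finset.card_le_one.mp hc z hz' v hv
      simp [this]
  · refine ⟨u, u, hu, hu, ?_⟩
    intro z hz
    rcases eq_or_ne z u with rfl | hzu
    · simp
    · exact absurd ⟨z, Finset.mem_erase.mpr ⟨hzu, hz⟩⟩ h2

lemma subset_pair (d : α) {s : Finset α} (h : s.card ≤ 2) : ∃ u v, s ⊆ {u, v} := by
  rcases s.eq_empty_or_nonempty with rfl | hne
  · exact ⟨d, d, by simp⟩
  · obtain ⟨u, v, _, _, hs⟩ := subset_pair_of_nonempty hne h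
    exact ⟨u, v, hs⟩

lemma pair_bound {p q u v : α} (hpq : p ≠ q) (S : Finset (Finset α))
    (hS : ∀ f ∈ S, p ∈ f ∧ q ∈ f ∧ f.card = 3 ∧
      ∃ z, z ∈ f ∧ z ≠ p ∧ z ≠ q ∧ (z = u ∨ z = v)) :
    S.card ≤ 2 := by
  have hsub : S ⊆ {insert p (insert q ({u} : Finset α)), insert p (insert q ({v} : Finset α))} := by
    intro f hf
    obtain ⟨hp, hq', hc, z, hz, hzp, hzq, hzuv⟩ := hS f hf
    have hfz := eq_triple hp hq' hz hpq hzp hzq hc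
    rcases hzuv with rfl | rfl
    · simp [hfz]
    · simp [hfz]
  exact (Finset.card_le_card hsub).trans ((Finset.card_insert_le _ _).trans (by simp))

lemma exists_T {V : Finset α} {E : Finset (Finset α)}
    (hE : ∀ e ∈ E, e ⊆ V ∧ e.card = 3) (htau : tau V E = 3)
    (hdel : ∀ e ∈ E, tau V (E.erase e) ≤ 2)
    {f : Finset α} (hf : f ∈ E) :
    ∃ T, T ⊆ V ∧ T.card ≤ 2 ∧ IsTransversal (E.erase f) T ∧ ∀ z ∈ T, z ∉ f := by
  have hVtrans : IsTransversal (E.erase f) V := by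
    intro g hg
    have hg' := Finset.mem_of_mem_erase hg
    obtain ⟨hsub, hcard⟩ := hE g hg'
    rw [Finset.inter_eq_left.mpr hsub]
    exact Finset.card_pos.mp (by omega)
  have hne : {n | ∃ T ⊆ V, T.card = n ∧ IsTransversal (E.erase f) T}.Nonempty :=
    ⟨V.card, V, Finset.Subset.refl V, rfl, hVtrans⟩
  obtain ⟨T, hTV, hTcard, hTtrans⟩ := Nat.sInf_mem hne
  have hT2 : T.card ≤ 2 := by rw [hTcard]; exact hdel f hf
  refine ⟨T, hTV, hT2, hTtrans, ?_⟩
  intro z hz hzf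
  have htr : IsTransversal E T := by
    intro g hg
    rcases eq_or_ne g f with rfl | hne'
    · exact ⟨z, Finset.mem_inter.mpr ⟨hzf, hz⟩⟩
    · exact hTtrans g (Finset.mem_erase.mpr ⟨hne', hg⟩)
  have h3 : tau V E ≤ T.card := Nat.sInf_le ⟨T, hTV, rfl, htr⟩
  rw [htau] at h3
  omega

lemma codeg {V : Finset α} {E : Finset (Finset α)}
    (hE : ∀ e ∈ E, e ⊆ V ∧ e.card = 3) (htau : tau V E = 3)
    (hdel : ∀ e ∈ E, tau V (E.erase e) ≤ 2)
    {p q : α} (hpq : p ≠ q) :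
    (E.filter (fun f => p ∈ f ∧ q ∈ f)).card ≤ 3 := by
  set S := E.filter (fun f => p ∈ f ∧ q ∈ f) with hSdef
  by_contra hcon
  push_neg at hcon
  have hne : S.Nonempty := Finset.card_pos.mp (by omega)
  obtain ⟨f1, hf1⟩ := hne
  have hf1E : f1 ∈ E := Finset.mem_of_mem_filter f1 hf1
  obtain ⟨hp1, hq1⟩ := (Finset.mem_filter.mp hf1).2
  obtain ⟨T, hTV, hTc, hTt, hTd⟩ := exists_T hE htau hdel hf1E
  obtain ⟨u, v, hsuv⟩ := subset_pair p hTc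
  have hb : (S.erase f1).card ≤ 2 := by
    apply pair_bound hpq
    intro f hf
    obtain ⟨hfne, hfS⟩ := Finset.mem_erase.mp hf
    have hfE : f ∈ E := Finset.mem_of_mem_filter f hfS
    obtain ⟨hpf, hqf⟩ := (Finset.mem_filter.mp hfS).2
    obtain ⟨-, hc3⟩ := hE f hfE
    obtain ⟨z, hz⟩ := hTt f (Finset.mem_erase.mpr ⟨hfne, hfE⟩)
    rw [Finset.mem_inter] at hz
    have hznf1 := hTd z hz.2
    refine ⟨hpf, hqf, hc3, z, hz.1, fun h => hznf1 (h ▸ hp1), fun h => hznf1 (h ▸ hq1), ?_⟩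
    have := hsuv hz.2
    simpa using this
  have := Finset.card_erase_of_mem hf1
  omega

lemma key {V : Finset α} {E : Finset (Finset α)}
    (hE : ∀ e ∈ E, e ⊆ V ∧ e.card = 3) (htau : tau V E = 3)
    (hdel : ∀ e ∈ E, tau V (E.erase e) ≤ 2)
    {a x w1 w2 w3 : α} {f1 f2 f3 : Finset α}
    (hf1 : f1 ∈ E) (hf2 : f2 ∈ E) (hf3 : f3 ∈ E)
    (he1 : f1 = insert a (insert x {w1}))
    (he2 : f2 = insert a (insert x {w2}))
    (he3 : f3 = insert a (insert x {w3}))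
    (hw12 : w1 ≠ w2) (hw13 : w1 ≠ w3) (hw23 : w2 ≠ w3)
    (hw2a : w2 ≠ a) (hw2x : w2 ≠ x) (hw3a : w3 ≠ a) (hw3x : w3 ≠ x) :
    ∃ T, IsTransversal (E.erase f1) T ∧ T = {w2, w3} ∧ ∀ z ∈ T, z ∉ f1 := by
  obtain ⟨T, hTV, hTc, hTt, hTd⟩ := exists_T hE htau hdel hf1
  have hne21 : f2 ≠ f1 := by
    intro h
    have hmem : w2 ∈ f1 := by rw [← h, he2]; simp
    rw [he1] at hmem
    simp only [Finset.mem_insert, Finset.mem_singleton] at hmem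
    rcases hmem with h' | h' | h'
    · exact hw2a h'
    · exact hw2x h'
    · exact hw12 h'.symm
  have hne31 : f3 ≠ f1 := by
    intro h
    have hmem : w3 ∈ f1 := by rw [← h, he3]; simp
    rw [he1] at hmem
    simp only [Finset.mem_insert, Finset.mem_singleton] at hmem
    rcases hmem with h' | h' | h'
    · exact hw3a h'
    · exact hw3x h'
    · exact hw13 h'.symm
  have hw2T : w2 ∈ T := by
    obtain ⟨z, hz⟩ := hTt f2 (Finset.mem_erase.mpr ⟨hne21, hf2⟩)
    rw [Finset.mem_inter] at hz
    have hznf1 := hTd z hz.2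
    have hmem := hz.1
    rw [he2] at hmem
    simp only [Finset.mem_insert, Finset.mem_singleton] at hmem
    rcases hmem with rfl | rfl | rfl
    · exact absurd (by rw [he1]; simp : z ∈ f1) hznf1
    · exact absurd (by rw [he1]; simp : z ∈ f1) hznf1
    · exact hz.2
  have hw3T : w3 ∈ T := by
    obtain ⟨z, hz⟩ := hTt f3 (Finset.mem_erase.mpr ⟨hne31, hf3⟩)
    rw [Finset.mem_inter] at hz
    have hznf1 := hTd z hz.2
    have hmem := hz.1
    rw [he3] at hmem
    simp only [Finset.mem_insert, Finset.mem_singleton] at hmem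
    rcases hmem with rfl | rfl | rfl
    · exact absurd (by rw [he1]; simp : z ∈ f1) hznf1
    · exact absurd (by rw [he1]; simp : z ∈ f1) hznf1
    · exact hz.2
  have hsub : ({w2, w3} : Finset α) ⊆ T := by
    intro z hz
    simp only [Finset.mem_insert, Finset.mem_singleton] at hz
    rcases hz with rfl | rfl <;> assumption
  have hTeq : T = {w2, w3} := by
    refine (Finset.eq_of_subset_of_card_le hsub ?_).symm
    rw [Finset.card_pair hw23]
    exact hTc
  exact ⟨T, hTt, hTeq, hTd⟩

lemma hit {V : Finset α} {E : Finset (Finset α)}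
    (hE : ∀ e ∈ E, e ⊆ V ∧ e.card = 3) (htau : tau V E = 3)
    (hdel : ∀ e ∈ E, tau V (E.erase e) ≤ 2)
    {a x w1 w2 w3 : α} {f1 f2 f3 e : Finset α}
    (hf1 : f1 ∈ E) (hf2 : f2 ∈ E) (hf3 : f3 ∈ E)
    (he1 : f1 = insert a (insert x {w1}))
    (he2 : f2 = insert a (insert x {w2}))
    (he3 : f3 = insert a (insert x {w3}))
    (hw12 : w1 ≠ w2) (hw13 : w1 ≠ w3) (hw23 : w2 ≠ w3)
    (hw2a : w2 ≠ a) (hw2x : w2 ≠ x) (hw3a : w3 ≠ a) (hw3x : w3 ≠ x)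
    (he : e ∈ E) (hxe : x ∉ e) :
    w2 ∈ e ∨ w3 ∈ e := by
  obtain ⟨T, hTt, hTeq, _⟩ := key hE htau hdel hf1 hf2 hf3 he1 he2 he3
    hw12 hw13 hw23 hw2a hw2x hw3a hw3x
  have hef1 : e ≠ f1 := by
    intro h
    exact hxe (by rw [h, he1]; simp)
  obtain ⟨z, hz⟩ := hTt e (Finset.mem_erase.mpr ⟨hef1, he⟩)
  rw [Finset.mem_inter, hTeq] at hz
  obtain ⟨hze, hzw⟩ := hz
  simp only [Finset.mem_insert, Finset.mem_singleton] at hzw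
  rcases hzw with rfl | rfl
  · exact Or.inl hze
  · exact Or.inr hze

lemma final {V : Finset α} {E : Finset (Finset α)}
    (hE : ∀ e ∈ E, e ⊆ V ∧ e.card = 3) (htau : tau V E = 3)
    (hdel : ∀ e ∈ E, tau V (E.erase e) ≤ 2)
    {a x y w1 w2 w3 : α} {f1 f2 f3 e : Finset α}
    (hf1 : f1 ∈ E) (hf2 : f2 ∈ E) (hf3 : f3 ∈ E)
    (he1 : f1 = insert a (insert x {w1}))
    (he2 : f2 = insert a (insert x {w2}))
    (he3 : f3 = insert a (insert x {w3}))
    (hw12 : w1 ≠ w2) (hw13 : w1 ≠ w3) (hw23 : w2 ≠ w3)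
    (hw2a : w2 ≠ a) (hw2x : w2 ≠ x) (hw3a : w3 ≠ a) (hw3x : w3 ≠ x)
    (hw2e : w2 ∈ e) (hw3e : w3 ∈ e) (hye : y ∉ e) (hay : a ≠ y)
    (hAy : (E.filter (fun f => a ∈ f ∧ y ∈ f ∧ x ∉ f)).card = 3) : False := by
  obtain ⟨T, hTt, hTeq, hTd⟩ := key hE htau hdel hf1 hf2 hf3 he1 he2 he3
    hw12 hw13 hw23 hw2a hw2x hw3a hw3x
  have hbound : (E.filter (fun f => a ∈ f ∧ y ∈ f ∧ x ∉ f)).card ≤ 2 := by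
    apply pair_bound hay
    intro g hg
    obtain ⟨hgE, hga, hgy, hgx⟩ := Finset.mem_filter.mp hg
    obtain ⟨-, hgc⟩ := hE g hgE
    have hgf1 : g ≠ f1 := by
      intro h
      exact hgx (by rw [h, he1]; simp)
    obtain ⟨z, hz⟩ := hTt g (Finset.mem_erase.mpr ⟨hgf1, hgE⟩)
    rw [Finset.mem_inter] at hz
    have hz2 : z = w2 ∨ z = w3 := by
      have := hz.2
      rw [hTeq] at this
      simpa using this
    have hznf1 := hTd z hz.2
    refine ⟨hga, hgy, hgc, z, hz.1, ?_, ?_, hz2⟩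
    · intro h
      exact hznf1 (h ▸ (by rw [he1]; simp : a ∈ f1))
    · intro h
      subst h
      rcases hz2 with rfl | rfl
      · exact hye hw2e
      · exact hye hw3e
  omega

end TauAux

theorem tau_critical_min_degree {α : Type*} [DecidableEq α]
    (V : Finset α) (E : Finset (Finset α))
    (hE : ∀ e ∈ E, e ⊆ V ∧ e.card = 3)
    (htau : tau V E = 3)
    (hdel : ∀ e ∈ E, tau V (E.erase e) ≤ 2) :
    ∃ v ∈ V, degree E v ≤ 6 := by
  classical
  have hEne : E.Nonempty := by
    rcases E.eq_empty_or_nonempty with rfl | h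
    · exfalso
      have h0 : tau V (∅ : Finset (Finset α)) ≤ 0 :=
        Nat.sInf_le ⟨∅, Finset.empty_subset V, Finset.card_empty,
          fun g hg => absurd hg (by simp)⟩
      omega
    · exact h
  obtain ⟨e, he⟩ := hEne
  obtain ⟨heV, hec⟩ := hE e he
  have hene : e.Nonempty := Finset.card_pos.mp (by omega)
  obtain ⟨a, ha⟩ := hene
  refine ⟨a, heV ha, ?_⟩
  by_contra hdeg
  push_neg at hdeg
  obtain ⟨T0, hT0V, hT0c, hT0t, hT0d⟩ := TauAux.exists_T hE htau hdel he
  rcases T0.eq_empty_or_nonempty with rfl | hT0ne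
  · -- E = {e}, degree ≤ 1
    have hall : ∀ g ∈ E, g = e := by
      intro g hg
      by_contra hne
      obtain ⟨z, hz⟩ := hT0t g (Finset.mem_erase.mpr ⟨hne, hg⟩)
      simp at hz
    have hd1 : degree E a ≤ 1 := by
      unfold degree
      have : E.filter (fun f => a ∈ f) ⊆ {e} := by
        intro g hg
        simp only [Finset.mem_singleton]
        exact hall g (Finset.mem_of_mem_filter g hg)
      exact (Finset.card_le_card this).trans (by simp)
    omega
  · obtain ⟨x, y, hxT, hyT, hT0sub⟩ := TauAux.subset_pair_of_nonempty hT0ne hT0c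
    have hxe : x ∉ e := hT0d x hxT
    have hye : y ∉ e := hT0d y hyT
    have hax : a ≠ x := fun h => hxe (h ▸ ha)
    have hay : a ≠ y := fun h => hye (h ▸ ha)
    set Ax := E.filter (fun f => a ∈ f ∧ x ∈ f) with hAxdef
    set Ay := E.filter (fun f => a ∈ f ∧ y ∈ f ∧ x ∉ f) with hAydef
    have hcover : (E.filter (fun f => a ∈ f)).erase e ⊆ Ax ∪ Ay := by
      intro f hf
      obtain ⟨hfe, hfF⟩ := Finset.mem_erase.mp hf
      obtain ⟨hfE, hfa⟩ := Finset.mem_filter.mp hfF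
      obtain ⟨z, hz⟩ := hT0t f (Finset.mem_erase.mpr ⟨hfe, hfE⟩)
      rw [Finset.mem_inter] at hz
      have hz2 := hT0sub hz.2
      simp only [Finset.mem_insert, Finset.mem_singleton] at hz2
      rw [Finset.mem_union]
      by_cases hxf : x ∈ f
      · exact Or.inl (Finset.mem_filter.mpr ⟨hfE, hfa, hxf⟩)
      · refine Or.inr (Finset.mem_filter.mpr ⟨hfE, hfa, ?_, hxf⟩)
        rcases hz2 with rfl | rfl
        · exact absurd hz.1 hxf
        · exact hz.1
    have hAx3 : Ax.card ≤ 3 := TauAux.codeg hE htau hdel hax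
    have hAy3 : Ay.card ≤ 3 := by
      have hsub : Ay ⊆ E.filter (fun f => a ∈ f ∧ y ∈ f) := by
        intro f hf
        obtain ⟨hfE, h1, h2, h3⟩ := Finset.mem_filter.mp hf
        exact Finset.mem_filter.mpr ⟨hfE, h1, h2⟩
      exact (Finset.card_le_card hsub).trans (TauAux.codeg hE htau hdel hay)
    have hdge : degree E a ≤ 1 + Ax.card + Ay.card := by
      unfold degree
      have h1 : E.filter (fun f => a ∈ f) ⊆
          insert e ((E.filter (fun f => a ∈ f)).erase e) := by
        intro g hg
        rcases eq_or_ne g e with rfl | hne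
        · exact Finset.mem_insert_self _ _
        · exact Finset.mem_insert_of_mem (Finset.mem_erase.mpr ⟨hne, hg⟩)
      calc (E.filter (fun f => a ∈ f)).card
          ≤ (insert e ((E.filter (fun f => a ∈ f)).erase e)).card := Finset.card_le_card h1
        _ ≤ 1 + ((E.filter (fun f => a ∈ f)).erase e).card := by
            rw [add_comm]; exact Finset.card_insert_le _ _
        _ ≤ 1 + (Ax ∪ Ay).card := by
            have := Finset.card_le_card hcover; omega
        _ ≤ 1 + (Ax.card + Ay.card) := by
            have := Finset.card_union_le Ax Ay; omega
        _ = 1 + Ax.card + Ay.card := by omega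
    have hAxc : Ax.card = 3 := by omega
    have hAyc : Ay.card = 3 := by omega
    obtain ⟨f1, f2, f3, h12, h13, h23, hAxeq⟩ := Finset.card_eq_three.mp hAxc
    have hf1Ax : f1 ∈ Ax := by rw [hAxeq]; simp
    have hf2Ax : f2 ∈ Ax := by rw [hAxeq]; simp
    have hf3Ax : f3 ∈ Ax := by rw [hAxeq]; simp
    obtain ⟨hf1E, hf1a, hf1x⟩ := Finset.mem_filter.mp hf1Ax
    obtain ⟨hf2E, hf2a, hf2x⟩ := Finset.mem_filter.mp hf2Ax
    obtain ⟨hf3E, hf3a, hf3x⟩ := Finset.mem_filter.mp hf3Ax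
    obtain ⟨w1, hw1a, hw1x, he1⟩ :=
      TauAux.third_vertex hf1a hf1x hax (hE f1 hf1E).2
    obtain ⟨w2, hw2a, hw2x, he2⟩ :=
      TauAux.third_vertex hf2a hf2x hax (hE f2 hf2E).2
    obtain ⟨w3, hw3a, hw3x, he3⟩ :=
      TauAux.third_vertex hf3a hf3x hax (hE f3 hf3E).2
    have hw12 : w1 ≠ w2 := by
      intro h; apply h12; rw [he1, he2, h]
    have hw13 : w1 ≠ w3 := by
      intro h; apply h13; rw [he1, he3, h]
    have hw23 : w2 ≠ w3 := by
      intro h; apply h23; rw [he2, he3, h]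
    have hAyc' : (E.filter (fun f => a ∈ f ∧ y ∈ f ∧ x ∉ f)).card = 3 := hAyc
    have h23e : w2 ∈ e ∨ w3 ∈ e :=
      TauAux.hit hE htau hdel hf1E hf2E hf3E he1 he2 he3
        hw12 hw13 hw23 hw2a hw2x hw3a hw3x he hxe
    have h13e : w1 ∈ e ∨ w3 ∈ e :=
      TauAux.hit hE htau hdel hf2E hf1E hf3E he2 he1 he3
        hw12.symm hw23 hw13 hw1a hw1x hw3a hw3x he hxe
    have h12e : w1 ∈ e ∨ w2 ∈ e :=
      TauAux.hit hE htau hdel hf3E hf1E hf2E he3 he1 he2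
        hw13.symm hw23.symm hw12 hw1a hw1x hw2a hw2x he hxe
    have hcases : (w2 ∈ e ∧ w3 ∈ e) ∨ (w1 ∈ e ∧ w3 ∈ e) ∨ (w1 ∈ e ∧ w2 ∈ e) := by
      tauto
    rcases hcases with ⟨hA, hB⟩ | ⟨hA, hB⟩ | ⟨hA, hB⟩
    · exact TauAux.final hE htau hdel hf1E hf2E hf3E he1 he2 he3
        hw12 hw13 hw23 hw2a hw2x hw3a hw3x hA hB hye hay hAyc'
    · exact TauAux.final hE htau hdel hf2E hf1E hf3E he2 he1 he3
        hw12.symm hw23 hw13 hw1a hw1x hw3a hw3x hA hB hye hay hAyc'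
    · exact TauAux.final hE htau hdel hf3E hf1E hf2E he3 he1 he2
        hw13.symm hw23.symm hw12 hw1a hw1x hw2a hw2x hA hB hye hay hAyc'
end

section
/- The 3-uniform hypergraph H on vertex set {1,...,9} with the 22 edges {1,2,3},{1,2,9},{1,3,8},{1,4,6},{1,4,8},{1,4,9},{1,5,7},{1,5,8},{1,5,9},{1,6,7},{2,3,6},{2,3,7},{2,4,9},{2,5,9},{2,6,7},{3,4,8},{3,5,8},{3,6,7},{4,6,8},{4,6,9},{5,7,8},{5,7,9} is not 2-colourable: every map φ: {1,...,9} → {0,1} makes some edge monochromatic. -/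
def Hedges : Finset (Finset ℕ) :=
  {{1,2,3},{1,2,9},{1,3,8},{1,4,6},{1,4,8},{1,4,9},{1,5,7},{1,5,8},{1,5,9},{1,6,7},
   {2,3,6},{2,3,7},{2,4,9},{2,5,9},{2,6,7},{3,4,8},{3,5,8},{3,6,7},{4,6,8},{4,6,9},
   {5,7,8},{5,7,9}}

def enc (v : Fin 9 → Fin 2) (x : ℕ) : Fin 2 :=
  if h : 1 ≤ x ∧ x ≤ 9 then v ⟨x - 1, by omega⟩ else 0

set_option maxRecDepth 10000 in
lemma key : ∀ v : Fin 9 → Fin 2, ∃ e ∈ Hedges, ∃ c, ∀ x ∈ e, enc v x = c := by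
  decide

lemma bounds : ∀ e ∈ Hedges, ∀ x ∈ e, 1 ≤ x ∧ x ≤ 9 := by decide

theorem H_not_two_colorable :
    ∀ φ : ℕ → Fin 2, ∃ e ∈ Hedges, ∃ c, ∀ x ∈ e, φ x = c := by
  intro φ
  obtain ⟨e, he, c, hc⟩ := key (fun i => φ (i + 1))
  refine ⟨e, he, c, fun x hx => ?_⟩
  obtain ⟨h1, h9⟩ := bounds e he x hx
  have := hc x hx
  rw [enc, dif_pos ⟨h1, h9⟩] at this
  simpa [Nat.sub_add_cancel h1] using this
end

section
/- Let H be an r-uniform hypergraph with τ(H) = t (t ≥ 2) such that τ(H - e) ≤ t - 1 for every edge e. Then |E(H)| ≤ C(r + t - 1, r). -/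
open Finset

section SetPairSystem

variable {ι β : Type*}

def setPairWeight (A B : Finset β) : ℚ := ((A.card + B.card).choose A.card : ℚ)⁻¹

lemma setPairWeight_empty_right (A : Finset β) : setPairWeight A ∅ = 1 := by
  simp [setPairWeight]

lemma succ_mul_inv_choose (a b : ℕ) :
    ((b + 1 : ℕ) : ℚ) * ((a + b).choose a : ℚ)⁻¹ =
      ((a + b + 1 : ℕ) : ℚ) * ((a + b + 1).choose a : ℚ)⁻¹ := by
  have h := Nat.choose_mul_succ_eq (a + b) a
  rw [show a + b + 1 - a = b + 1 by omega] at h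
  have h₁ : ((a + b).choose a : ℚ) ≠ 0 := by exact_mod_cast (Nat.choose_pos (by omega)).ne'
  have h₂ : ((a + b + 1).choose a : ℚ) ≠ 0 := by exact_mod_cast (Nat.choose_pos (by omega)).ne'
  field_simp
  rw [mul_comm]
  exact_mod_cast h.symm

structure IsSetPairSystem_s19 (s : Finset ι) (A B : ι → Finset β) : Prop where
  disjoint : ∀ i ∈ s, Disjoint (A i) (B i)
  not_disjoint : ∀ i ∈ s, ∀ j ∈ s, i ≠ j → ¬Disjoint (A i) (B j)

variable {s : Finset ι} {A B : ι → Finset β}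

lemma IsSetPairSystem_s19.eq_singleton_of_empty (h : IsSetPairSystem_s19 s A B) {i : ι} (hi : i ∈ s)
    (hB : B i = ∅) : s = {i} :=
  eq_singleton_iff_unique_mem.2 ⟨hi, fun j hj => by_contra fun hji =>
    h.not_disjoint j hj i hi hji (hB ▸ disjoint_empty_right _)⟩

variable [DecidableEq β]

lemma sum_setPairWeight_erase {X A B : Finset β} (hAB : Disjoint A B) (hX : A ∪ B ⊆ X)
    (hB : B.Nonempty) :
    ∑ x ∈ X \ A, setPairWeight A (B.erase x) = X.card * setPairWeight A B := by
  obtain ⟨b, hb⟩ : ∃ b, B.card = b + 1 := Nat.exists_eq_succ_of_ne_zero hB.card_pos.ne'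
  have hsplit : X \ A = B ∪ X \ (A ∪ B) := by
    ext x
    have := @hX x
    simp only [mem_sdiff, mem_union, disjoint_left] at *
    grind
  have hcard : ((X \ (A ∪ B)).card : ℚ) + A.card + B.card = X.card := by
    rw [add_assoc, ← Nat.cast_add, ← card_union_of_disjoint hAB]
    exact_mod_cast card_sdiff_add_card_eq_card hX
  have hin : ∀ x ∈ B, setPairWeight A (B.erase x) = ((A.card + b).choose A.card : ℚ)⁻¹ := by
    intro x hx
    rw [setPairWeight, card_erase_of_mem hx, hb]
    rfl
  have hout : ∀ x ∈ X \ (A ∪ B), setPairWeight A (B.erase x) = setPairWeight A B := fun x hx => by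
    rw [erase_eq_of_notMem fun h => (mem_sdiff.1 hx).2 (mem_union_right _ h)]
  have hB_weight : (B.card : ℚ) * ((A.card + b).choose A.card : ℚ)⁻¹ =
      (A.card + B.card : ℕ) * setPairWeight A B := by
    rw [setPairWeight, hb, ← add_assoc]
    exact succ_mul_inv_choose _ _
  rw [hsplit, sum_union (disjoint_sdiff_self_right.mono_left subset_union_right),
    sum_congr rfl hin, sum_congr rfl hout, sum_const, sum_const, nsmul_eq_mul, nsmul_eq_mul,
    hB_weight, ← hcard]
  push_cast
  ring

lemma IsSetPairSystem_s19.erase (h : IsSetPairSystem_s19 s A B) (x : β) :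
    IsSetPairSystem_s19 {i ∈ s | x ∉ A i} A (fun i => (B i).erase x) where
  disjoint i hi := (h.disjoint i (mem_filter.1 hi).1).mono_right (erase_subset _ _)
  not_disjoint i hi j hj hij := by
    rw [mem_filter] at hi hj
    obtain ⟨y, hy⟩ := not_disjoint_iff_nonempty_inter.1 (h.not_disjoint i hi.1 j hj.1 hij)
    rw [mem_inter] at hy
    refine not_disjoint_iff.2 ⟨y, hy.1, mem_erase.2 ⟨?_, hy.2⟩⟩
    rintro rfl
    exact hi.2 hy.1

lemma IsSetPairSystem_s19.sum_setPairWeight_le_one_of_subset (X : Finset β)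
    (h : IsSetPairSystem_s19 s A B) (hX : ∀ i ∈ s, A i ∪ B i ⊆ X) :
    ∑ i ∈ s, setPairWeight (A i) (B i) ≤ 1 := by
  induction X using Finset.strongInduction generalizing s B with
  | H X ih =>
  by_cases hempty : ∃ i ∈ s, B i = ∅
  · obtain ⟨i, hi, hBi⟩ := hempty
    rw [h.eq_singleton_of_empty hi hBi, sum_singleton, hBi, setPairWeight_empty_right]
  push Not at hempty
  obtain rfl | ⟨i₀, hi₀⟩ := s.eq_empty_or_nonempty
  · simp
  have hXpos : (0 : ℚ) < X.card := by
    obtain ⟨y, hy⟩ := hempty i₀ hi₀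
    exact_mod_cast card_pos.2 ⟨y, hX i₀ hi₀ (mem_union_right _ hy)⟩
  have hlocal : ∀ x ∈ X, ∑ i ∈ s with x ∉ A i, setPairWeight (A i) ((B i).erase x) ≤ 1 := by
    intro x hx
    refine ih (X.erase x) (erase_ssubset hx) (h.erase x) fun i hi y hy => ?_
    rw [mem_filter] at hi
    have := @hX i hi.1 y
    simp only [mem_union, mem_erase] at hy this ⊢
    grind
  have hdouble : X.card * ∑ i ∈ s, setPairWeight (A i) (B i) =
      ∑ x ∈ X, ∑ i ∈ s with x ∉ A i, setPairWeight (A i) ((B i).erase x) := by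
    rw [mul_sum]
    calc ∑ i ∈ s, X.card * setPairWeight (A i) (B i)
        = ∑ i ∈ s, ∑ x ∈ X \ A i, setPairWeight (A i) ((B i).erase x) :=
          sum_congr rfl fun i hi =>
            (sum_setPairWeight_erase (h.disjoint i hi) (hX i hi) (hempty i hi)).symm
      _ = _ := sum_comm' fun i x => by simp only [mem_sdiff, mem_filter]; tauto
  have hle : X.card * ∑ i ∈ s, setPairWeight (A i) (B i) ≤ X.card * 1 := by
    rw [hdouble, mul_one]
    exact (sum_le_sum hlocal).trans (by simp)
  exact le_of_mul_le_mul_left hle hXpos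

lemma IsSetPairSystem_s19.sum_setPairWeight_le_one (h : IsSetPairSystem_s19 s A B) :
    ∑ i ∈ s, setPairWeight (A i) (B i) ≤ 1 :=
  h.sum_setPairWeight_le_one_of_subset (s.biUnion fun i => A i ∪ B i) fun _ hi =>
    subset_biUnion_of_mem (fun i => A i ∪ B i) hi

lemma IsSetPairSystem_s19.card_le_choose (h : IsSetPairSystem_s19 s A B) {a b : ℕ}
    (hA : ∀ i ∈ s, (A i).card = a) (hB : ∀ i ∈ s, (B i).card ≤ b) :
    s.card ≤ (a + b).choose a := by
  have hpos : (0 : ℚ) < (a + b).choose a := by exact_mod_cast Nat.choose_pos (by omega)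
  have hweight : ∀ i ∈ s, ((a + b).choose a : ℚ)⁻¹ ≤ setPairWeight (A i) (B i) := by
    intro i hi
    rw [setPairWeight, hA i hi]
    gcongr
    · exact_mod_cast Nat.choose_pos (by omega)
    · exact hB i hi
  have hsum : (s.card : ℚ) * ((a + b).choose a : ℚ)⁻¹ ≤ 1 :=
    calc (s.card : ℚ) * ((a + b).choose a : ℚ)⁻¹ = ∑ i ∈ s, ((a + b).choose a : ℚ)⁻¹ := by
          rw [sum_const, nsmul_eq_mul]
      _ ≤ ∑ i ∈ s, setPairWeight (A i) (B i) := sum_le_sum hweight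
      _ ≤ 1 := h.sum_setPairWeight_le_one
  rw [← div_eq_mul_inv, div_le_one hpos] at hsum
  exact_mod_cast hsum

end SetPairSystem

section Transversal

variable {α : Type*} [DecidableEq α] {V T : Finset α} {E : Finset (Finset α)}

lemma IsTransversal.of_erase {e : Finset α} (h : IsTransversal (E.erase e) T)
    (he : (e ∩ T).Nonempty) : IsTransversal E T := fun f hf => by
  obtain rfl | hfe := eq_or_ne f e
  · exact he
  · exact h f (mem_erase.2 ⟨hfe, hf⟩)

lemma isTransversal_of_forall_subset (hE : ∀ e ∈ E, e ⊆ V) (hempty : ∅ ∉ E) : IsTransversal E V :=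
  fun e he => by
    rw [inter_eq_left.2 (hE e he)]
    exact nonempty_iff_ne_empty.2 fun h => hempty (h ▸ he)

lemma tau_le_card (hTV : T ⊆ V) (hT : IsTransversal E T) : tau V E ≤ T.card :=
  Nat.sInf_le ⟨T, hTV, rfl, hT⟩

lemma exists_isTransversal_card_eq_tau (hV : IsTransversal E V) :
    ∃ T ⊆ V, T.card = tau V E ∧ IsTransversal E T :=
  Nat.sInf_mem (s := {n | ∃ T ⊆ V, T.card = n ∧ IsTransversal E T}) ⟨V.card, V, subset_rfl, rfl, hV⟩

lemma tau_eq_zero_of_empty_mem (h : ∅ ∈ E) : tau V E = 0 := by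
  have hno : {n | ∃ T ⊆ V, T.card = n ∧ IsTransversal E T} = ∅ :=
    Set.eq_empty_of_forall_notMem fun _ ⟨_, _, _, hT⟩ => by simpa using hT ∅ h
  rw [tau, hno, Nat.sInf_empty]

lemma exists_disjoint_isTransversal_erase (hV : IsTransversal E V) {e : Finset α}
    (hlt : tau V (E.erase e) < tau V E) :
    ∃ T, T.card = tau V (E.erase e) ∧ Disjoint e T ∧ IsTransversal (E.erase e) T := by
  obtain ⟨T, hTV, hTcard, hT⟩ :=
    exists_isTransversal_card_eq_tau fun f hf => hV f (mem_of_mem_erase hf)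
  refine ⟨T, hTcard, ?_, hT⟩
  by_contra hmeet
  have := tau_le_card hTV (hT.of_erase (not_disjoint_iff_nonempty_inter.1 hmeet))
  omega

end Transversal

theorem tau_critical_general_bound {α : Type*} [DecidableEq α]
    (V : Finset α) (E : Finset (Finset α)) (r t : ℕ) (htt : 2 ≤ t)
    (hE : ∀ e ∈ E, e ⊆ V ∧ e.card = r)
    (htau : tau V E = t)
    (hdel : ∀ e ∈ E, tau V (E.erase e) ≤ t - 1) :
    E.card ≤ Nat.choose (r + t - 1) r := by
  have hempty : ∅ ∉ E := fun h => by
    have := tau_eq_zero_of_empty_mem (V := V) h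
    omega
  have hV : IsTransversal E V := isTransversal_of_forall_subset (fun e he => (hE e he).1) hempty
  have hT : ∀ e ∈ E, ∃ T, T.card = tau V (E.erase e) ∧ Disjoint e T ∧
      IsTransversal (E.erase e) T := fun e he =>
    exists_disjoint_isTransversal_erase hV (by have := hdel e he; omega)
  choose! T hTcard hTdisj hTmeet using hT
  have hsystem : IsSetPairSystem_s19 E id T :=
    ⟨hTdisj, fun e he f hf hef =>
      not_disjoint_iff_nonempty_inter.2 (hTmeet f hf e (mem_erase.2 ⟨hef, he⟩))⟩
  have hbound := hsystem.card_le_choose (fun e he => (hE e he).2)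
    fun e he => (hTcard e he).trans_le (hdel e he)
  rwa [← Nat.add_sub_assoc (by omega)] at hbound
end
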